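/- arXiv:0710.1671 — 3 statements merged into one kernel-verified Lean document; each statement's English description precedes it below -/
import Mathlib

section
/- Let A be an element of the parabolic subgroup P, and let a > 0 be the real number with A e_0 = a e_0. Then there exist a row vector b ∈ ℝ^n and m ∈ O(h) such that A = p(a,b,m); that is, every element of P has the block form with rows [[a, b, c], [0, m, d], [0, 0, a^{-1}]] where c = −(2a)^{-1} b h^{-1} bᵀ and d = −a^{-1} m h^{-1} bᵀ. -/
/-!
Write `A` in block form with respect to `ℝ ⊕ ℝⁿ ⊕ ℝ`; its first column is `a e₀`. Comparing
entries of `Aᵀ h̃ A = h̃` gives `a A∞∞ = 1`, a bottom row vanishing off the corners,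
`mᵀ h m = h` for the middle block `m`, and `mᵀ h d = -a⁻¹ bᵀ` for the last column `d`.
As `h² = 1`, `m` is invertible with inverse `h mᵀ h`, which solves for `d`; the `(∞, ∞)`
entry then determines `c`.
-/

open Matrix

noncomputable section

abbrev Idx (p q : ℕ) : Type := Unit ⊕ (Fin (p + q)) ⊕ Unit

/-- The diagonal quadratic form of signature `(p,q)` on `ℝ^n`, `n = p + q`. -/
def hMat (p q : ℕ) : Matrix (Fin (p + q)) (Fin (p + q)) ℝ :=
  Matrix.diagonal fun i => if (i : ℕ) < p then (1 : ℝ) else -1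

/-- The quadratic form of signature `(p+1,q+1)` on `ℝ^{n+2}`, in block form
`[[0,0,1],[0,h,0],[1,0,0]]`. -/
def htMat (p q : ℕ) : Matrix (Idx p q) (Idx p q) ℝ :=
  Matrix.of fun I J =>
    match I, J with
    | Sum.inl _, Sum.inr (Sum.inr _) => (1 : ℝ)
    | Sum.inr (Sum.inr _), Sum.inl _ => 1
    | Sum.inr (Sum.inl i), Sum.inr (Sum.inl j) => hMat p q i j
    | _, _ => 0

/-- The first standard basis vector `e₀` of `ℝ^{n+2}`. -/
def e0 (p q : ℕ) : Idx p q → ℝ := fun I =>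
  match I with
  | Sum.inl _ => 1
  | _ => 0

/-- `c = -(2a)⁻¹ b h⁻¹ bᵀ`. -/
def cVal (p q : ℕ) (a : ℝ) (b : Fin (p + q) → ℝ) : ℝ :=
  -(2 * a)⁻¹ * (b ⬝ᵥ ((hMat p q)⁻¹ *ᵥ b))

/-- `d = -a⁻¹ m h⁻¹ bᵀ`. -/
def dVec (p q : ℕ) (a : ℝ) (b : Fin (p + q) → ℝ)
    (m : Matrix (Fin (p + q)) (Fin (p + q)) ℝ) : Fin (p + q) → ℝ :=
  (-a⁻¹) • (m *ᵥ ((hMat p q)⁻¹ *ᵥ b))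

/-- The element `p(a,b,m)` of the parabolic subgroup, in block form
`[[a,b,c],[0,m,d],[0,0,a⁻¹]]`. -/
def pMat (p q : ℕ) (a : ℝ) (b : Fin (p + q) → ℝ)
    (m : Matrix (Fin (p + q)) (Fin (p + q)) ℝ) : Matrix (Idx p q) (Idx p q) ℝ :=
  Matrix.of fun I J =>
    match I, J with
    | Sum.inl _, Sum.inl _ => a
    | Sum.inl _, Sum.inr (Sum.inl j) => b j
    | Sum.inl _, Sum.inr (Sum.inr _) => cVal p q a b
    | Sum.inr (Sum.inl i), Sum.inr (Sum.inl j) => m i j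
    | Sum.inr (Sum.inl i), Sum.inr (Sum.inr _) => dVec p q a b m i
    | Sum.inr (Sum.inr _), Sum.inr (Sum.inr _) => a⁻¹
    | _, _ => 0

/-- `|x|² = xᵀ h x`. -/
def normSq (p q : ℕ) (x : Fin (p + q) → ℝ) : ℝ := x ⬝ᵥ (hMat p q *ᵥ x)

/-- The denominator `D(x) = a + b x - ½ c |x|²`. -/
def Dden (p q : ℕ) (a : ℝ) (b x : Fin (p + q) → ℝ) : ℝ :=
  a + b ⬝ᵥ x - (1 / 2) * cVal p q a b * normSq p q x

/-- The conformal transformation `φ(x) = (m x - ½|x|² d)/D(x)`. -/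
def phiMap (p q : ℕ) (a : ℝ) (b : Fin (p + q) → ℝ)
    (m : Matrix (Fin (p + q)) (Fin (p + q)) ℝ) (x : Fin (p + q) → ℝ) :
    Fin (p + q) → ℝ :=
  (Dden p q a b x)⁻¹ • (m *ᵥ x - ((1 / 2) * normSq p q x) • dVec p q a b m)

/-- The conformal factor `Ω(x) = D(x)⁻¹`. -/
def OmegaFn (p q : ℕ) (a : ℝ) (b : Fin (p + q) → ℝ) (x : Fin (p + q) → ℝ) : ℝ :=
  (Dden p q a b x)⁻¹

/-- Jacobian matrix of a map at a point: `J i j = ∂ⱼ φⁱ (x)`. -/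
def jacobianAt (p q : ℕ) (φ : (Fin (p + q) → ℝ) → (Fin (p + q) → ℝ))
    (x : Fin (p + q) → ℝ) : Matrix (Fin (p + q)) (Fin (p + q)) ℝ :=
  Matrix.of fun i j => fderiv ℝ φ x (Pi.single j 1) i

/-- Row vector of partial derivatives of a scalar function at a point. -/
def gradAt (p q : ℕ) (f : (Fin (p + q) → ℝ) → ℝ) (x : Fin (p + q) → ℝ) :
    Fin (p + q) → ℝ :=
  fun j => fderiv ℝ f x (Pi.single j 1)

theorem Matrix.transpose_mul_mul_apply {m n R : Type*} [Fintype m] [CommSemiring R]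
    (M : Matrix m n R) (h : Matrix m m R) (i j : n) :
    (Mᵀ * h * M) i j = (fun k => M k i) ⬝ᵥ (h *ᵥ fun k => M k j) := by
  rw [Matrix.mul_assoc]
  rfl

theorem Matrix.mul_mul_transpose_eq_of_transpose_mul_mul_eq {n R : Type*} [Fintype n]
    [DecidableEq n] [CommRing R] {h m : Matrix n n R} (hh : h * h = 1)
    (hm : mᵀ * h * m = h) : m * h * mᵀ = h := by
  have hinv : m * (h * mᵀ * h) = 1 :=
    mul_eq_one_comm.mp <| by rw [Matrix.mul_assoc, Matrix.mul_assoc, ← Matrix.mul_assoc mᵀ, hm, hh]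
  calc m * h * mᵀ = m * (h * mᵀ * h) * h := by
        simp only [Matrix.mul_assoc, hh, Matrix.mul_one]
    _ = h := by rw [hinv, Matrix.one_mul]

theorem hMat_mul_self (p q : ℕ) : hMat p q * hMat p q = 1 := by
  rw [hMat, diagonal_mul_diagonal, ← diagonal_one]
  congr 1
  funext i
  split_ifs <;> norm_num

theorem hMat_inv (p q : ℕ) : (hMat p q)⁻¹ = hMat p q :=
  inv_eq_right_inv (hMat_mul_self p q)

theorem transpose_mul_htMat_mul_apply {p q : ℕ} {ι : Type*} (M : Matrix (Idx p q) ι ℝ)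
    (I J : ι) :
    (Mᵀ * htMat p q * M) I J =
      M (Sum.inl ()) I * M (Sum.inr (Sum.inr ())) J
        + M (Sum.inr (Sum.inr ())) I * M (Sum.inl ()) J
        + (fun k => M (Sum.inr (Sum.inl k)) I) ⬝ᵥ
            (hMat p q *ᵥ fun k => M (Sum.inr (Sum.inl k)) J) := by
  simp [Matrix.transpose_mul_mul_apply, dotProduct, mulVec, Fintype.sum_sum_type, htMat]
  ring

theorem mulVec_e0 {p q : ℕ} {ι : Type*} (A : Matrix ι (Idx p q) ℝ) :
    A *ᵥ e0 p q = fun I => A I (Sum.inl ()) := by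
  funext I
  simp [mulVec, dotProduct, Fintype.sum_sum_type, e0]

section Blocks

variable {p q : ℕ} (A : Matrix (Idx p q) (Idx p q) ℝ)

def blockB : Fin (p + q) → ℝ := fun j => A (Sum.inl ()) (Sum.inr (Sum.inl j))

def blockM : Matrix (Fin (p + q)) (Fin (p + q)) ℝ :=
  A.submatrix (Sum.inr ∘ Sum.inl) (Sum.inr ∘ Sum.inl)

def blockD : Fin (p + q) → ℝ := fun i => A (Sum.inr (Sum.inl i)) (Sum.inr (Sum.inr ()))

variable {A} {a : ℝ}

theorem apply_first_eq (hAe : A *ᵥ e0 p q = a • e0 p q) (I : Idx p q) :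
    A I (Sum.inl ()) = a * e0 p q I := by
  simpa [mulVec_e0] using congrFun hAe I

theorem htMat_apply_of_transpose_mul_htMat_mul (hA : Aᵀ * htMat p q * A = htMat p q)
    (I J : Idx p q) :
    A (Sum.inl ()) I * A (Sum.inr (Sum.inr ())) J
        + A (Sum.inr (Sum.inr ())) I * A (Sum.inl ()) J
        + (fun k => A (Sum.inr (Sum.inl k)) I) ⬝ᵥ
            (hMat p q *ᵥ fun k => A (Sum.inr (Sum.inl k)) J) = htMat p q I J := by
  rw [← transpose_mul_htMat_mul_apply, hA]

theorem mul_apply_last_last (hA : Aᵀ * htMat p q * A = htMat p q)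
    (hAe : A *ᵥ e0 p q = a • e0 p q) :
    a * A (Sum.inr (Sum.inr ())) (Sum.inr (Sum.inr ())) = 1 := by
  have := htMat_apply_of_transpose_mul_htMat_mul hA (Sum.inl ()) (Sum.inr (Sum.inr ()))
  simpa [apply_first_eq hAe, e0, htMat] using this

theorem apply_last_last_eq_inv (hA : Aᵀ * htMat p q * A = htMat p q)
    (hAe : A *ᵥ e0 p q = a • e0 p q) :
    A (Sum.inr (Sum.inr ())) (Sum.inr (Sum.inr ())) = a⁻¹ :=
  eq_inv_of_mul_eq_one_right (mul_apply_last_last hA hAe)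

theorem apply_last_mid_eq_zero (hA : Aᵀ * htMat p q * A = htMat p q)
    (hAe : A *ᵥ e0 p q = a • e0 p q) (j : Fin (p + q)) :
    A (Sum.inr (Sum.inr ())) (Sum.inr (Sum.inl j)) = 0 := by
  have ha : a ≠ 0 := left_ne_zero_of_mul_eq_one (mul_apply_last_last hA hAe)
  have := htMat_apply_of_transpose_mul_htMat_mul hA (Sum.inl ()) (Sum.inr (Sum.inl j))
  simpa [apply_first_eq hAe, e0, htMat, ha] using this

theorem transpose_blockM_mul_hMat_mul_blockM (hA : Aᵀ * htMat p q * A = htMat p q)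
    (hAe : A *ᵥ e0 p q = a • e0 p q) :
    (blockM A)ᵀ * hMat p q * blockM A = hMat p q := by
  ext i j
  have := htMat_apply_of_transpose_mul_htMat_mul hA (Sum.inr (Sum.inl i)) (Sum.inr (Sum.inl j))
  simp only [apply_last_mid_eq_zero hA hAe, mul_zero, zero_mul, add_zero, zero_add, htMat,
    of_apply] at this
  rw [Matrix.transpose_mul_mul_apply]
  exact this

theorem transpose_blockM_mulVec_hMat_mulVec_blockD (hA : Aᵀ * htMat p q * A = htMat p q)
    (hAe : A *ᵥ e0 p q = a • e0 p q) :
    (blockM A)ᵀ *ᵥ (hMat p q *ᵥ blockD A) = -a⁻¹ • blockB A := by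
  funext i
  have := htMat_apply_of_transpose_mul_htMat_mul hA (Sum.inr (Sum.inl i)) (Sum.inr (Sum.inr ()))
  simp only [apply_last_mid_eq_zero hA hAe, apply_last_last_eq_inv hA hAe, htMat, of_apply] at this
  change (fun k => blockM A k i) ⬝ᵥ (hMat p q *ᵥ blockD A) = -a⁻¹ * blockB A i
  unfold blockM blockD blockB
  simp only [submatrix_apply, Function.comp_apply]
  linear_combination this

theorem blockD_eq_dVec (hA : Aᵀ * htMat p q * A = htMat p q)
    (hAe : A *ᵥ e0 p q = a • e0 p q) :
    blockD A = dVec p q a (blockB A) (blockM A) := by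
  have hm : blockM A * hMat p q * (blockM A)ᵀ = hMat p q :=
    mul_mul_transpose_eq_of_transpose_mul_mul_eq (hMat_mul_self p q)
      (transpose_blockM_mul_hMat_mul_blockM hA hAe)
  calc blockD A = (blockM A * hMat p q * (blockM A)ᵀ * hMat p q) *ᵥ blockD A := by
        rw [hm, hMat_mul_self, one_mulVec]
    _ = (blockM A * hMat p q) *ᵥ ((blockM A)ᵀ *ᵥ (hMat p q *ᵥ blockD A)) := by
        simp only [mulVec_mulVec, Matrix.mul_assoc]
    _ = dVec p q a (blockB A) (blockM A) := by
        rw [transpose_blockM_mulVec_hMat_mulVec_blockD hA hAe, dVec, hMat_inv, mulVec_smul,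
          mulVec_mulVec]

theorem blockD_dotProduct_hMat_mulVec_blockD (hA : Aᵀ * htMat p q * A = htMat p q)
    (hAe : A *ᵥ e0 p q = a • e0 p q) :
    blockD A ⬝ᵥ (hMat p q *ᵥ blockD A) = a⁻¹ ^ 2 * (blockB A ⬝ᵥ (hMat p q *ᵥ blockB A)) := by
  nth_rewrite 1 [blockD_eq_dVec hA hAe]
  rw [dVec, hMat_inv, smul_dotProduct, ← vecMul_transpose, ← dotProduct_mulVec,
    transpose_blockM_mulVec_hMat_mulVec_blockD hA hAe, dotProduct_smul,
    dotProduct_comm (hMat p q *ᵥ blockB A), smul_eq_mul, smul_eq_mul]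
  ring

theorem apply_first_last_eq_cVal (hA : Aᵀ * htMat p q * A = htMat p q)
    (hAe : A *ᵥ e0 p q = a • e0 p q) :
    A (Sum.inl ()) (Sum.inr (Sum.inr ())) = cVal p q a (blockB A) := by
  have ha : a ≠ 0 := left_ne_zero_of_mul_eq_one (mul_apply_last_last hA hAe)
  have := htMat_apply_of_transpose_mul_htMat_mul hA (Sum.inr (Sum.inr ())) (Sum.inr (Sum.inr ()))
  change _ + _ + blockD A ⬝ᵥ (hMat p q *ᵥ blockD A) = _ at this
  rw [blockD_dotProduct_hMat_mulVec_blockD hA hAe, apply_last_last_eq_inv hA hAe, htMat,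
    of_apply] at this
  rw [cVal, hMat_inv]
  field_simp at this ⊢
  linear_combination this

end Blocks

theorem statement0_general (p q : ℕ)
    (A : Matrix (Idx p q) (Idx p q) ℝ)
    (hA : Aᵀ * htMat p q * A = htMat p q)
    (a : ℝ) (hAe : A *ᵥ e0 p q = a • e0 p q) :
    ∃ (b : Fin (p + q) → ℝ) (m : Matrix (Fin (p + q)) (Fin (p + q)) ℝ),
      mᵀ * hMat p q * m = hMat p q ∧ A = pMat p q a b m := by
  refine ⟨blockB A, blockM A, transpose_blockM_mul_hMat_mul_blockM hA hAe, ?_⟩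
  have hd (i : Fin (p + q)) :
      A (Sum.inr (Sum.inl i)) (Sum.inr (Sum.inr ())) = dVec p q a (blockB A) (blockM A) i :=
    congrFun (blockD_eq_dVec hA hAe) i
  ext (_ | i | _) (_ | j | _) <;>
    simp [pMat, e0, apply_first_eq hAe, apply_last_mid_eq_zero hA hAe,
      apply_last_last_eq_inv hA hAe, apply_first_last_eq_cVal hA hAe, hd, blockB, blockM]

/-- Every element of the parabolic subgroup `P` has the block form `p(a,b,m)`
with `b ∈ ℝⁿ` a row vector and `m ∈ O(h)`. -/
theorem statement0 (p q : ℕ) (hn : 3 ≤ p + q)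
    (A : Matrix (Idx p q) (Idx p q) ℝ)
    (hA : Aᵀ * htMat p q * A = htMat p q)
    (a : ℝ) (ha : 0 < a) (hAe : A *ᵥ e0 p q = a • e0 p q) :
    ∃ (b : Fin (p + q) → ℝ) (m : Matrix (Fin (p + q)) (Fin (p + q)) ℝ),
      mᵀ * hMat p q * m = hMat p q ∧ A = pMat p q a b m :=
  statement0_general p q A hA a hAe
end
end

section
/- For every ω > 0, every row vector β ∈ ℝ^n, and every A ∈ GL(n,ℝ) with ω^{-1}A ∈ O(h), there exists a unique triple (a,b,m) ∈ ℝ_{>0} × ℝ^n × O(h) such that Ω_{a,b,m}(0) = ω, the row vector of partial derivatives of Ω_{a,b,m} at 0 equals β, and the Jacobian matrix of φ_{a,b,m} at 0 equals A; namely (a,b,m) = (ω^{-1}, −ω^{-2}β, ω^{-1}A). -/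
/-! At the origin the terms quadratic in `x` (those carrying `|x|²`) have vanishing derivative, so
`D(0) = a` and `dD(0) = b`. Hence `Ω(0) = a⁻¹`, `dΩ(0) = -a⁻² b` and `dφ(0) = a⁻¹ m`, and these
three equations determine `(a, b, m)` from `(ω, β, A)`. -/

open Matrix

noncomputable section

section Calculus

variable {ι : Type*} [Fintype ι]

def dotProductCLM : (ι → ℝ) →L[ℝ] (ι → ℝ) →L[ℝ] ℝ :=
  (dotProductBilin ℝ ℝ).toContinuousBilinearMap

@[simp]
lemma dotProductCLM_apply (x y : ι → ℝ) : dotProductCLM x y = x ⬝ᵥ y := rfl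

lemma hasFDerivAt_dotProduct_mulVec_self_zero (M : Matrix ι ι ℝ) :
    HasFDerivAt (fun x : ι → ℝ => x ⬝ᵥ (M *ᵥ x)) (0 : (ι → ℝ) →L[ℝ] ℝ) 0 := by
  have := dotProductCLM.hasFDerivAt_of_bilinear (hasFDerivAt_id (0 : ι → ℝ))
    (M.mulVecLin.toContinuousLinearMap.hasFDerivAt (x := 0))
  simpa using this

end Calculus

variable {p q : ℕ} {a : ℝ} {b : Fin (p + q) → ℝ} {m : Matrix (Fin (p + q)) (Fin (p + q)) ℝ}

lemma gradAt_eq_of_hasFDerivAt {f : (Fin (p + q) → ℝ) → ℝ} {x v : Fin (p + q) → ℝ}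
    (h : HasFDerivAt f (dotProductCLM v) x) : gradAt p q f x = v := by
  ext j
  simp [gradAt, h.fderiv]

lemma jacobianAt_eq_of_hasFDerivAt {φ : (Fin (p + q) → ℝ) → Fin (p + q) → ℝ}
    {x : Fin (p + q) → ℝ} {M : Matrix (Fin (p + q)) (Fin (p + q)) ℝ}
    (h : HasFDerivAt φ M.mulVecLin.toContinuousLinearMap x) : jacobianAt p q φ x = M := by
  ext i j
  simp [jacobianAt, h.fderiv]

lemma hasFDerivAt_normSq_zero : HasFDerivAt (normSq p q) (0 : (Fin (p + q) → ℝ) →L[ℝ] ℝ) 0 :=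
  hasFDerivAt_dotProduct_mulVec_self_zero (hMat p q)

lemma Dden_zero : Dden p q a b 0 = a := by
  simp [Dden, normSq]

lemma OmegaFn_zero : OmegaFn p q a b 0 = a⁻¹ := by
  rw [OmegaFn, Dden_zero]

lemma hasFDerivAt_Dden_zero : HasFDerivAt (Dden p q a b) (dotProductCLM b) 0 := by
  have := ((dotProductCLM b).hasFDerivAt.const_add a).fun_sub
    (hasFDerivAt_normSq_zero.const_mul ((1 / 2) * cVal p q a b))
  exact this.congr_fderiv (by simp)

lemma hasFDerivAt_OmegaFn_zero (ha : a ≠ 0) :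
    HasFDerivAt (OmegaFn p q a b) (dotProductCLM ((-(a ^ 2)⁻¹) • b)) 0 := by
  have hinv : HasFDerivAt (fun t : ℝ => t⁻¹) ((1 : ℝ →L[ℝ] ℝ).smulRight (-(a ^ 2)⁻¹))
      (Dden p q a b 0) := by
    rw [Dden_zero]
    exact hasFDerivAt_inv ha
  exact (hinv.comp 0 hasFDerivAt_Dden_zero).congr_fderiv (by ext v; simp [mul_comm])

lemma hasFDerivAt_phiMap_zero (ha : a ≠ 0) :
    HasFDerivAt (phiMap p q a b m) (a⁻¹ • m).mulVecLin.toContinuousLinearMap 0 := by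
  have := (hasFDerivAt_OmegaFn_zero (b := b) ha).fun_smul
    (m.mulVecLin.toContinuousLinearMap.hasFDerivAt.fun_sub
      ((hasFDerivAt_normSq_zero.const_mul (1 / 2 : ℝ)).smul_const (dVec p q a b m)))
  exact this.congr_fderiv (by ext v i; simp [OmegaFn_zero, normSq])

lemma gradAt_OmegaFn_zero (ha : a ≠ 0) :
    gradAt p q (OmegaFn p q a b) 0 = (-(a ^ 2)⁻¹) • b :=
  gradAt_eq_of_hasFDerivAt (hasFDerivAt_OmegaFn_zero ha)

lemma jacobianAt_phiMap_zero (ha : a ≠ 0) :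
    jacobianAt p q (phiMap p q a b m) 0 = a⁻¹ • m :=
  jacobianAt_eq_of_hasFDerivAt (hasFDerivAt_phiMap_zero ha)

theorem statement6_general (p q : ℕ)
    (ω : ℝ) (hω : 0 < ω) (β : Fin (p + q) → ℝ)
    (A : Matrix (Fin (p + q)) (Fin (p + q)) ℝ)
    (hA : (ω⁻¹ • A)ᵀ * hMat p q * (ω⁻¹ • A) = hMat p q) :
    ((0 < ω⁻¹ ∧ (ω⁻¹ • A)ᵀ * hMat p q * (ω⁻¹ • A) = hMat p q) ∧
      OmegaFn p q ω⁻¹ ((-(ω ^ 2)⁻¹) • β) 0 = ω ∧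
      gradAt p q (OmegaFn p q ω⁻¹ ((-(ω ^ 2)⁻¹) • β)) 0 = β ∧
      jacobianAt p q (phiMap p q ω⁻¹ ((-(ω ^ 2)⁻¹) • β) (ω⁻¹ • A)) 0 = A) ∧
    ∀ (a : ℝ) (b : Fin (p + q) → ℝ)
      (m : Matrix (Fin (p + q)) (Fin (p + q)) ℝ),
      0 < a → mᵀ * hMat p q * m = hMat p q →
      OmegaFn p q a b 0 = ω →
      gradAt p q (OmegaFn p q a b) 0 = β →
      jacobianAt p q (phiMap p q a b m) 0 = A →
      a = ω⁻¹ ∧ b = (-(ω ^ 2)⁻¹) • β ∧ m = ω⁻¹ • A := by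
  have hω₀ : ω ≠ 0 := hω.ne'
  have hω₀' : ω⁻¹ ≠ 0 := inv_ne_zero hω₀
  have hβ : (-(ω⁻¹ ^ 2)⁻¹) • (-(ω ^ 2)⁻¹) • β = β := by
    rw [smul_smul, inv_pow, inv_inv, neg_mul_neg, mul_inv_cancel₀ (pow_ne_zero 2 hω₀), one_smul]
  refine ⟨⟨⟨inv_pos.mpr hω, hA⟩, ?_, ?_, ?_⟩, ?_⟩
  · rw [OmegaFn_zero, inv_inv]
  · rw [gradAt_OmegaFn_zero hω₀', hβ]
  · rw [jacobianAt_phiMap_zero hω₀', inv_smul_smul₀ hω₀']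
  · rintro a b m - - hΩ hgrad hjac
    obtain rfl : a = ω⁻¹ := by rw [← hΩ, OmegaFn_zero, inv_inv]
    rw [gradAt_OmegaFn_zero hω₀'] at hgrad
    rw [jacobianAt_phiMap_zero hω₀'] at hjac
    refine ⟨rfl, ?_, ?_⟩
    · rw [← hgrad, smul_smul, inv_pow, inv_inv, neg_mul_neg, inv_mul_cancel₀ (pow_ne_zero 2 hω₀),
        one_smul]
    · rw [← hjac, smul_inv_smul₀ hω₀']

/-- Given `ω > 0`, a row vector `β`, and `A` with `ω⁻¹ A ∈ O(h)`, there is a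
unique `(a,b,m) ∈ ℝ₊ × ℝⁿ × O(h)` with `Ω(0) = ω`, `Ω'(0) = β`, `φ'(0) = A`;
namely `(a,b,m) = (ω⁻¹, -ω⁻² β, ω⁻¹ A)`. -/
theorem statement6 (p q : ℕ) (hn : 3 ≤ p + q)
    (ω : ℝ) (hω : 0 < ω) (β : Fin (p + q) → ℝ)
    (A : Matrix (Fin (p + q)) (Fin (p + q)) ℝ)
    (hA : (ω⁻¹ • A)ᵀ * hMat p q * (ω⁻¹ • A) = hMat p q) :
    ((0 < ω⁻¹ ∧ (ω⁻¹ • A)ᵀ * hMat p q * (ω⁻¹ • A) = hMat p q) ∧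
      OmegaFn p q ω⁻¹ ((-(ω ^ 2)⁻¹) • β) 0 = ω ∧
      gradAt p q (OmegaFn p q ω⁻¹ ((-(ω ^ 2)⁻¹) • β)) 0 = β ∧
      jacobianAt p q (phiMap p q ω⁻¹ ((-(ω ^ 2)⁻¹) • β) (ω⁻¹ • A)) 0 = A) ∧
    ∀ (a : ℝ) (b : Fin (p + q) → ℝ)
      (m : Matrix (Fin (p + q)) (Fin (p + q)) ℝ),
      0 < a → mᵀ * hMat p q * m = hMat p q →
      OmegaFn p q a b 0 = ω →
      gradAt p q (OmegaFn p q a b) 0 = β →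
      jacobianAt p q (phiMap p q a b m) 0 = A →
      a = ω⁻¹ ∧ b = (-(ω ^ 2)⁻¹) • β ∧ m = ω⁻¹ • A :=
  statement6_general p q ω hω β A hA
end
end

section
/- Let w ∈ ℝ be such that w + n/2 is not a positive integer. Let U ⊆ ℝ^{n+2} ∖ {0} be an open cone and let f̃ be a smooth function on U with Xf̃ = w f̃ on U. If f̃(y) = 0 for every y ∈ N ∩ U and Δ̃f̃ vanishes to infinite order at every point of N ∩ U, then f̃ vanishes to infinite order at every point of N ∩ U. (This is the uniqueness, to infinite order along the null cone, of the homogeneous harmonic extension of a density of weight w in the unobstructed case.) -/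
open Matrix

noncomputable section

/-- `Q(x) = Σ h̃_{IJ} x^I x^J`. -/
def QForm (p q : ℕ) (x : Idx p q → ℝ) : ℝ := ∑ I, ∑ J, htMat p q I J * x I * x J

/-- The partial derivative `∂_I f`. -/
def pderiv (p q : ℕ) (I : Idx p q) (f : (Idx p q → ℝ) → ℝ) : (Idx p q → ℝ) → ℝ :=
  fun x => fderiv ℝ f x (Pi.single I 1)

/-- The ambient Laplacian `Δ̃f = Σ h̃^{IJ} ∂_I ∂_J f`. -/
def laplt (p q : ℕ) (f : (Idx p q → ℝ) → ℝ) : (Idx p q → ℝ) → ℝ :=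
  fun x => ∑ I, ∑ J, (htMat p q)⁻¹ I J * pderiv p q I (pderiv p q J f) x

/-- The Euler operator `Xf = Σ x^I ∂_I f`. -/
def euler (p q : ℕ) (f : (Idx p q → ℝ) → ℝ) : (Idx p q → ℝ) → ℝ :=
  fun x => ∑ I, x I * pderiv p q I f x

/-- The null cone `N = {x ≠ 0 : Q(x) = 0}` of `h̃`. -/
def nullCone (p q : ℕ) : Set (Idx p q → ℝ) := {x | x ≠ 0 ∧ QForm p q x = 0}

/-- A function vanishes to infinite order at `y` if its value and all iterated
derivatives of every order vanish at `y`. -/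
def VanishesToInfOrderAt (p q : ℕ) (f : (Idx p q → ℝ) → ℝ) (y : Idx p q → ℝ) : Prop :=
  ∀ k : ℕ, iteratedFDeriv ℝ k f y = 0

/-- An open cone in `ℝ^{n+2} ∖ {0}`. -/
def IsOpenCone (p q : ℕ) (U : Set (Idx p q → ℝ)) : Prop :=
  IsOpen U ∧ (∀ x ∈ U, x ≠ 0) ∧ ∀ x ∈ U, ∀ l : ℝ, 0 < l → l • x ∈ U

/-- The constant `c_m` with `c_m⁻¹ = (-4)^{m-1} ((m-1)!)²`. -/
def cConst (m : ℕ) : ℝ := ((-4 : ℝ) ^ (m - 1) * ((m - 1).factorial : ℝ) ^ 2)⁻¹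

section Helpers

variable {p q : ℕ}

lemma sum_idx (f : Idx p q → ℝ) :
    ∑ I, f I = f (Sum.inl ()) + (∑ i, f (Sum.inr (Sum.inl i))) + f (Sum.inr (Sum.inr ())) := by
  rw [Fintype.sum_sum_type, Fintype.sum_sum_type]
  simp [Fintype.sum_unique]
  ring

lemma ht_symm (I J : Idx p q) : htMat p q I J = htMat p q J I := by
  rcases I with _ | i | _ <;> rcases J with _ | j | _ <;>
    simp [htMat, hMat, Matrix.diagonal_apply]
  rcases eq_or_ne i j with h | h
  · subst h; rfl
  · rw [if_neg h, if_neg (Ne.symm h)]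

lemma hsq (I K : Idx p q) : ∑ J, htMat p q I J * htMat p q J K = if I = K then 1 else 0 := by
  rw [sum_idx]
  rcases I with _ | i | _ <;> rcases K with _ | k | _ <;>
    simp [htMat, hMat, Matrix.diagonal_apply, Finset.mul_sum]
  · rcases eq_or_ne i k with h | h
    · subst h; rcases lt_or_ge (i:ℕ) p with h2 | h2 <;> simp [h2, h2.not_gt]
    · simp [h]

lemma ht_mul_ht : htMat p q * htMat p q = 1 := by
  ext I K
  rw [Matrix.mul_apply, hsq, Matrix.one_apply]

lemma ht_inv : (htMat p q)⁻¹ = htMat p q := Matrix.inv_eq_right_inv ht_mul_ht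

/-- the bilinear form of `htMat` -/
def bform (p q : ℕ) (x z : Idx p q → ℝ) : ℝ := ∑ I, ∑ J, htMat p q I J * x I * z J

lemma QForm_eq_bform (x : Idx p q → ℝ) : QForm p q x = bform p q x x := rfl

lemma bform_symm (x z : Idx p q → ℝ) : bform p q x z = bform p q z x := by
  rw [bform, Finset.sum_comm]
  apply Finset.sum_congr rfl; intro J _
  apply Finset.sum_congr rfl; intro I _
  rw [ht_symm]; ring

lemma bform_add_left (x y z : Idx p q → ℝ) :
    bform p q (x + y) z = bform p q x z + bform p q y z := by
  simp [bform, mul_add, add_mul, Finset.sum_add_distrib]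

lemma bform_smul_left (c : ℝ) (x z : Idx p q → ℝ) :
    bform p q (c • x) z = c * bform p q x z := by
  rw [bform, bform, Finset.mul_sum]
  apply Finset.sum_congr rfl; intro I _
  rw [Finset.mul_sum]
  apply Finset.sum_congr rfl; intro J _
  rw [Pi.smul_apply, smul_eq_mul]; ring

lemma bform_add_right (x y z : Idx p q → ℝ) :
    bform p q x (y + z) = bform p q x y + bform p q x z := by
  rw [bform_symm, bform_add_left, bform_symm z, bform_symm y]

lemma bform_smul_right (c : ℝ) (x z : Idx p q → ℝ) :
    bform p q x (c • z) = c * bform p q x z := by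
  rw [bform_symm, bform_smul_left, bform_symm]

lemma bform_sub_left (x y z : Idx p q → ℝ) :
    bform p q (x - y) z = bform p q x z - bform p q y z := by
  have := bform_add_left (x - y) y z; simp at this; linarith

/-- expansion of quadratic form -/
lemma QForm_add (x z : Idx p q → ℝ) :
    QForm p q (x + z) = QForm p q x + 2 * bform p q x z + QForm p q z := by
  rw [QForm_eq_bform, QForm_eq_bform, QForm_eq_bform, bform_add_left, bform_add_right,
    bform_add_right, bform_symm z x]; ring

lemma QForm_smul (c : ℝ) (x : Idx p q → ℝ) : QForm p q (c • x) = c ^ 2 * QForm p q x := by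
  rw [QForm_eq_bform, QForm_eq_bform, bform_smul_left, bform_smul_right]; ring

/-- basis vector -/
def eV (p q : ℕ) (I : Idx p q) : Idx p q → ℝ := Pi.single I 1

lemma bform_single_right (x : Idx p q → ℝ) (K : Idx p q) :
    bform p q x (eV p q K) = ∑ I, htMat p q I K * x I := by
  rw [bform]
  apply Finset.sum_congr rfl; intro I _
  rw [Finset.sum_eq_single K]
  · simp [eV]
  · intro J _ hJ; simp [eV, Pi.single_apply, hJ]
  · simp

lemma bform_single_left (z : Idx p q → ℝ) (K : Idx p q) :
    bform p q (eV p q K) z = ∑ J, htMat p q K J * z J := by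
  rw [bform_symm, bform_single_right]
  apply Finset.sum_congr rfl; intro I _; rw [ht_symm]

lemma bform_basis_expand_left (x z : Idx p q → ℝ) :
    bform p q x z = ∑ I, x I * bform p q (eV p q I) z := by
  rw [bform]
  apply Finset.sum_congr rfl; intro I _
  rw [bform_single_left, Finset.mul_sum]
  apply Finset.sum_congr rfl; intros; ring

/-- key identity: `h̃` applied to `h̃ y` gives back `y`. -/
lemma ht_lam (y : Idx p q → ℝ) (I : Idx p q) :
    ∑ J, htMat p q I J * bform p q y (eV p q J) = y I := by
  have : ∀ J, bform p q y (eV p q J) = ∑ A, htMat p q A J * y A := fun J =>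
    bform_single_right y J
  calc ∑ J, htMat p q I J * bform p q y (eV p q J)
      = ∑ J, ∑ A, htMat p q I J * (htMat p q A J * y A) := by
        apply Finset.sum_congr rfl; intro J _; rw [this J, Finset.mul_sum]
    _ = ∑ A, (∑ J, htMat p q I J * htMat p q J A) * y A := by
        rw [Finset.sum_comm]
        apply Finset.sum_congr rfl; intro A _
        rw [Finset.sum_mul]
        apply Finset.sum_congr rfl; intro J _
        rw [ht_symm A J]; ring
    _ = y I := by
        rw [Finset.sum_eq_single I]
        · rw [hsq]; simp
        · intro A _ hA; rw [hsq, if_neg (Ne.symm hA)]; ring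
        · simp

lemma ht_trace : ∑ I, ∑ J, htMat p q I J * htMat p q I J = (p + q : ℝ) + 2 := by
  have : ∀ I : Idx p q, ∑ J, htMat p q I J * htMat p q J I = 1 := by
    intro I; rw [hsq]; simp
  calc ∑ I, ∑ J, htMat p q I J * htMat p q I J
      = ∑ I : Idx p q, (1 : ℝ) := by
        apply Finset.sum_congr rfl; intro I _
        rw [← this I]
        apply Finset.sum_congr rfl; intro J _
        rw [ht_symm I J]
    _ = (p + q : ℝ) + 2 := by
        rw [Finset.sum_const]
        simp [Fintype.card_sum]
        ring

lemma bform_basis (I J : Idx p q) : bform p q (eV p q I) (eV p q J) = htMat p q I J := by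
  rw [bform_single_right, Finset.sum_eq_single I]
  · simp [eV]
  · intro A _ hA; simp [eV, Pi.single_apply, hA]
  · simp

/-- existence of a null vector non-orthogonal to a given nonzero vector -/
lemma exists_null_partner (y : Idx p q → ℝ) (hy : y ≠ 0) :
    ∃ z, QForm p q z = 0 ∧ bform p q y z ≠ 0 := by
  classical
  set e0 : Idx p q → ℝ := eV p q (Sum.inl ()) with he0
  set einf : Idx p q → ℝ := eV p q (Sum.inr (Sum.inr ())) with heinf
  have h1 : bform p q y e0 = y (Sum.inr (Sum.inr ())) := by
    rw [he0, bform_single_right, sum_idx]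
    simp [htMat]
  have h2 : bform p q y einf = y (Sum.inl ()) := by
    rw [heinf, bform_single_right, sum_idx]
    simp [htMat]
  have hQ0 : QForm p q e0 = 0 := by
    rw [QForm_eq_bform, he0, bform_basis]
    simp [htMat]
  have hQinf : QForm p q einf = 0 := by
    rw [QForm_eq_bform, heinf, bform_basis]
    simp [htMat]
  by_cases hc1 : y (Sum.inr (Sum.inr ())) ≠ 0
  · exact ⟨e0, hQ0, by rw [h1]; exact hc1⟩
  by_cases hc2 : y (Sum.inl ()) ≠ 0
  · exact ⟨einf, hQinf, by rw [h2]; exact hc2⟩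
  push_neg at hc1 hc2
  have hmid : ∃ i : Fin (p + q), y (Sum.inr (Sum.inl i)) ≠ 0 := by
    by_contra hno
    push_neg at hno
    apply hy
    funext I
    rcases I with _ | i | _
    · exact hc2
    · exact hno i
    · exact hc1
  obtain ⟨i, hi⟩ := hmid
  set d : ℝ := hMat p q i i with hd
  have hdval : d = if (i : ℕ) < p then 1 else -1 := by
    rw [hd, hMat, Matrix.diagonal_apply_eq]
  have hdne : d ≠ 0 := by
    rw [hdval]; split <;> norm_num
  set ei : Idx p q → ℝ := eV p q (Sum.inr (Sum.inl i)) with hei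
  have hQei : QForm p q ei = d := by
    rw [QForm_eq_bform, hei, bform_basis]
    simp [htMat, hd]
  have hei0 : bform p q ei e0 = 0 := by
    rw [hei, he0, bform_basis]; simp [htMat]
  have heiinf : bform p q ei einf = 0 := by
    rw [hei, heinf, bform_basis]; simp [htMat]
  have he0inf : bform p q e0 einf = 1 := by
    rw [he0, heinf, bform_basis]; simp [htMat]
  have hyei : bform p q y ei = d * y (Sum.inr (Sum.inl i)) := by
    rw [hei, bform_single_right, sum_idx]
    simp only [htMat, hMat, Matrix.of_apply]
    rw [Finset.sum_eq_single i]
    · simp [Matrix.diagonal_apply_eq, hd, hMat]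
      try ring
    · intro j _ hj; simp [Matrix.diagonal_apply, hj]
    · simp
  refine ⟨ei + e0 + (-(d/2)) • einf, ?_, ?_⟩
  · rw [QForm_add, QForm_add, QForm_smul, hQinf, hQ0, hQei, hei0,
      bform_add_left, bform_smul_right, bform_smul_right, heiinf, he0inf]
    ring
  · rw [bform_add_right, bform_add_right, bform_smul_right, h1, h2, hyei, hc1, hc2]
    simpa using mul_ne_zero hdne hi

/-! ### Iterated directional derivatives -/

def dd (p q : ℕ) (v : Idx p q → ℝ) (g : (Idx p q → ℝ) → ℝ) : (Idx p q → ℝ) → ℝ :=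
  fun x => fderiv ℝ g x v

def itD (p q : ℕ) : List (Idx p q → ℝ) → ((Idx p q → ℝ) → ℝ) → (Idx p q → ℝ) → ℝ
  | [], g => g
  | v :: L, g => dd p q v (itD p q L g)

variable {U : Set (Idx p q → ℝ)} {g g₁ g₂ : (Idx p q → ℝ) → ℝ}

lemma diffAt_of_sm {F : Type*} [NormedAddCommGroup F] [NormedSpace ℝ F]
    (hU : IsOpen U) {g : (Idx p q → ℝ) → F} (hg : ContDiffOn ℝ (⊤ : ℕ∞) g U)
    {x : Idx p q → ℝ} (hx : x ∈ U) :
    DifferentiableAt ℝ g x :=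
  ((hg x hx).contDiffAt (hU.mem_nhds hx)).differentiableAt (by simp)

lemma sm_dd (hU : IsOpen U) (hg : ContDiffOn ℝ (⊤ : ℕ∞) g U) (v : Idx p q → ℝ) :
    ContDiffOn ℝ (⊤ : ℕ∞) (dd p q v g) U := by
  have h1 : ContDiffOn ℝ (⊤ : ℕ∞) (fderiv ℝ g) U := hg.fderiv_of_isOpen hU (by simp)
  exact (ContinuousLinearMap.apply ℝ ℝ v).contDiff.comp_contDiffOn h1

lemma sm_itD (hU : IsOpen U) (hg : ContDiffOn ℝ (⊤ : ℕ∞) g U) (L : List (Idx p q → ℝ)) :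
    ContDiffOn ℝ (⊤ : ℕ∞) (itD p q L g) U := by
  induction L with
  | nil => exact hg
  | cons v L ih => exact sm_dd hU ih v

lemma itD_append (L M : List (Idx p q → ℝ)) :
    itD p q (L ++ M) g = itD p q L (itD p q M g) := by
  induction L with
  | nil => rfl
  | cons v L ih =>
    show dd p q v (itD p q (L ++ M) g) = dd p q v (itD p q L (itD p q M g))
    rw [ih]

lemma dd_dd_eq (hU : IsOpen U) (hg : ContDiffOn ℝ (⊤ : ℕ∞) g U) {x : Idx p q → ℝ} (hx : x ∈ U)
    (u v : Idx p q → ℝ) :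
    dd p q u (dd p q v g) x = fderiv ℝ (fderiv ℝ g) x u v := by
  have h1 : ContDiffOn ℝ (⊤ : ℕ∞) (fderiv ℝ g) U := hg.fderiv_of_isOpen hU (by simp)
  have h2 : DifferentiableAt ℝ (fderiv ℝ g) x := diffAt_of_sm hU h1 hx
  have : fderiv ℝ (fun z => (fderiv ℝ g z) v) x
      = (fderiv ℝ (fderiv ℝ g) x).flip v := by
    rw [fderiv_clm_apply h2 (differentiableAt_const v)]
    simp
  show fderiv ℝ (fun z => (fderiv ℝ g z) v) x u = _
  rw [this]
  rfl

lemma itD_swap (hU : IsOpen U) (hg : ContDiffOn ℝ (⊤ : ℕ∞) g U) {x : Idx p q → ℝ} (hx : x ∈ U)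
    (u v : Idx p q → ℝ) (L : List (Idx p q → ℝ)) :
    itD p q (u :: v :: L) g x = itD p q (v :: u :: L) g x := by
  have hL : ContDiffOn ℝ (⊤ : ℕ∞) (itD p q L g) U := sm_itD hU hg L
  have hsym := ((hL x hx).contDiffAt (hU.mem_nhds hx)).isSymmSndFDerivAt (by rw [minSmoothness_of_isRCLikeNormedField]; exact WithTop.coe_le_coe.2 le_top)
  show dd p q u (dd p q v (itD p q L g)) x = dd p q v (dd p q u (itD p q L g)) x
  rw [dd_dd_eq hU hL hx, dd_dd_eq hU hL hx]
  exact hsym.eq u v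

lemma itD_perm (hU : IsOpen U) (hg : ContDiffOn ℝ (⊤ : ℕ∞) g U) {L L' : List (Idx p q → ℝ)}
    (hP : L.Perm L') : ∀ x ∈ U, itD p q L g x = itD p q L' g x := by
  induction hP with
  | nil => intro x _; rfl
  | cons v _ ih =>
    intro x hx
    show dd p q v _ x = dd p q v _ x
    unfold dd
    rw [Filter.EventuallyEq.fderiv_eq (by filter_upwards [hU.mem_nhds hx] with z hz using ih z hz)]
  | swap u v L => exact fun x hx => itD_swap hU hg hx v u L
  | trans _ _ ih1 ih2 => exact fun x hx => (ih1 x hx).trans (ih2 x hx)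

lemma itD_outer_add (a b : Idx p q → ℝ) (L : List (Idx p q → ℝ)) (x : Idx p q → ℝ) :
    itD p q ((a + b) :: L) g x = itD p q (a :: L) g x + itD p q (b :: L) g x := by
  show fderiv ℝ _ x (a + b) = _
  rw [map_add]; rfl

lemma itD_outer_smul (c : ℝ) (a : Idx p q → ℝ) (L : List (Idx p q → ℝ)) (x : Idx p q → ℝ) :
    itD p q ((c • a) :: L) g x = c * itD p q (a :: L) g x := by
  show fderiv ℝ _ x (c • a) = _
  rw [ContinuousLinearMap.map_smul, smul_eq_mul]; rfl

lemma itD_outer_basis (v : Idx p q → ℝ) (L : List (Idx p q → ℝ)) (x : Idx p q → ℝ) :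
    itD p q (v :: L) g x = ∑ I, v I * itD p q (eV p q I :: L) g x := by
  show fderiv ℝ _ x v = _
  have hv : v = ∑ I, v I • eV p q I := by
    funext J
    rw [Finset.sum_apply]
    rw [Finset.sum_eq_single J]
    · simp [eV]
    · intro A _ hA; simp [eV, Pi.single_apply, hA]
    · simp
  conv_lhs => rw [hv]
  rw [map_sum]
  apply Finset.sum_congr rfl; intro I _
  rw [ContinuousLinearMap.map_smul, smul_eq_mul]; rfl

lemma itD_sum {ι : Type*} (hU : IsOpen U) (s : Finset ι) (F : ι → (Idx p q → ℝ) → ℝ)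
    (hF : ∀ i ∈ s, ContDiffOn ℝ (⊤ : ℕ∞) (F i) U) (L : List (Idx p q → ℝ)) :
    ∀ x ∈ U, itD p q L (fun z => ∑ i ∈ s, F i z) x = ∑ i ∈ s, itD p q L (F i) x := by
  induction L with
  | nil => intro x _; rfl
  | cons v L ih =>
    intro x hx
    show fderiv ℝ (itD p q L fun z => ∑ i ∈ s, F i z) x v = _
    have h1 : fderiv ℝ (itD p q L fun z => ∑ i ∈ s, F i z) x
        = fderiv ℝ (fun z => ∑ i ∈ s, itD p q L (F i) z) x := by
      apply Filter.EventuallyEq.fderiv_eq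
      filter_upwards [hU.mem_nhds hx] with z hz using ih z hz
    rw [h1, fderiv_fun_sum (fun i hi => diffAt_of_sm hU (sm_itD hU (hF i hi) L) hx)]
    simp only [ContinuousLinearMap.coe_sum', Finset.sum_apply]
    rfl

lemma itD_const_mul (hU : IsOpen U) (c : ℝ) (F : (Idx p q → ℝ) → ℝ)
    (hF : ContDiffOn ℝ (⊤ : ℕ∞) F U) (L : List (Idx p q → ℝ)) :
    ∀ x ∈ U, itD p q L (fun z => c * F z) x = c * itD p q L F x := by
  induction L with
  | nil => intro x _; rfl
  | cons v L ih =>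
    intro x hx
    show fderiv ℝ (itD p q L fun z => c * F z) x v = _
    have h1 : fderiv ℝ (itD p q L fun z => c * F z) x
        = fderiv ℝ (fun z => c * itD p q L F z) x := by
      apply Filter.EventuallyEq.fderiv_eq
      filter_upwards [hU.mem_nhds hx] with z hz using ih z hz
    rw [h1, fderiv_const_mul (diffAt_of_sm hU (sm_itD hU hF L) hx)]
    rfl

/-- bridge between `iteratedFDeriv` and iterated directional derivatives -/
lemma iteratedFDeriv_eq_itD (hU : IsOpen U) (hg : ContDiffOn ℝ (⊤ : ℕ∞) g U) :
    ∀ (k : ℕ) (m : Fin k → (Idx p q → ℝ)) (x : Idx p q → ℝ), x ∈ U →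
      iteratedFDeriv ℝ k g x m = itD p q (List.ofFn m) g x := by
  intro k
  induction k with
  | zero => intro m x _; simp [itD, iteratedFDeriv_zero_apply]
  | succ k ih =>
    intro m x hx
    rw [iteratedFDeriv_succ_apply_left, List.ofFn_succ]
    show _ = fderiv ℝ (itD p q (List.ofFn (Fin.tail m)) g) x (m 0)
    have hd : DifferentiableAt ℝ (iteratedFDeriv ℝ k g) x := by
      exact (((hg x hx).contDiffAt (hU.mem_nhds hx)).iteratedFDeriv_right
        (m := 1) (by exact_mod_cast le_top)).differentiableAt one_ne_zero
    have key : fderiv ℝ (fun z => iteratedFDeriv ℝ k g z (Fin.tail m)) x (m 0)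
        = (fderiv ℝ (iteratedFDeriv ℝ k g) x (m 0)) (Fin.tail m) :=
      fderiv_continuousMultilinear_apply_const_apply hd (Fin.tail m) (m 0)
    rw [← key]
    have h2 : fderiv ℝ (fun z => iteratedFDeriv ℝ k g z (Fin.tail m)) x
        = fderiv ℝ (itD p q (List.ofFn (Fin.tail m)) g) x := by
      apply Filter.EventuallyEq.fderiv_eq
      filter_upwards [hU.mem_nhds hx] with z hz using ih (Fin.tail m) z hz
    rw [h2]

lemma vec_eq_sum (v : Idx p q → ℝ) : v = ∑ I, v I • eV p q I := by
  funext J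
  rw [Finset.sum_apply, Finset.sum_eq_single J]
  · simp [eV]
  · intro A _ hA; simp [eV, Pi.single_apply, hA]
  · simp

/-- Tangential derivatives of functions vanishing on the null cone vanish. -/
lemma tangential_vanish {U' : Set (Idx p q → ℝ)} (hU' : IsOpen U')
    (hne : ∀ x ∈ U', x ≠ 0) {y : Idx p q → ℝ} (hy : y ∈ U') (hyQ : QForm p q y = 0)
    {s : (Idx p q → ℝ) → ℝ} (hs : DifferentiableAt ℝ s y)
    (hvan : ∀ x ∈ U', QForm p q x = 0 → s x = 0)
    {v : Idx p q → ℝ} (hv : bform p q y v = 0) :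
    fderiv ℝ s y v = 0 := by
  obtain ⟨z, hz0, hyz⟩ := exists_null_partner y (hne y hy)
  set z' : Idx p q → ℝ := (bform p q y z)⁻¹ • z with hz'
  have hQz' : QForm p q z' = 0 := by rw [hz', QForm_smul, hz0]; ring
  have hyz' : bform p q y z' = 1 := by
    rw [hz', bform_smul_right, inv_mul_cancel₀ hyz]
  set bv : ℝ := bform p q v z' with hbv
  set r : ℝ → ℝ := fun t => -QForm p q v / (2 * (1 + t * bv)) with hr
  set γ : ℝ → (Idx p q → ℝ) := fun t => y + t • v + (t ^ 2 * r t) • z' with hγ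
  have hγ0 : γ 0 = y := by simp [hγ]
  -- the curve stays on the null cone
  have hQγ : ∀ t : ℝ, 1 + t * bv ≠ 0 → QForm p q (γ t) = 0 := by
    intro t ht
    rw [hγ]
    simp only [QForm_add, QForm_smul, bform_add_left, bform_smul_left, bform_smul_right,
      hQz', hyQ, hv, hyz']
    rw [hr]
    simp only
    field_simp
    ring
  -- derivative of the curve at 0 is v
  have hB : HasDerivAt (fun t : ℝ => 2 * (1 + t * bv)) (2 * bv) 0 := by
    have : HasDerivAt (fun t : ℝ => 1 + t * bv) bv 0 := by
      simpa using (hasDerivAt_id (0:ℝ)).mul_const bv |>.const_add 1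
    simpa using this.const_mul 2
  have hrd : HasDerivAt r (-QForm p q v * -(2 * bv) / (2 * (1 + 0 * bv)) ^ 2) 0 := by
    have h2 : (2 : ℝ) * (1 + 0 * bv) ≠ 0 := by norm_num
    simpa using (hasDerivAt_const (0:ℝ) (-QForm p q v)).fun_div hB h2
  have hsc : HasDerivAt (fun t : ℝ => t ^ 2 * r t) 0 0 := by
    have := (hasDerivAt_pow 2 (0:ℝ)).fun_mul hrd
    simpa using this
  have hγd : HasDerivAt γ v 0 := by
    have h1 : HasDerivAt (fun t : ℝ => t • v) v 0 := by
      simpa using (hasDerivAt_id (0:ℝ)).smul_const v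
    have h2 : HasDerivAt (fun t : ℝ => (t ^ 2 * r t) • z') ((0:ℝ) • z') 0 :=
      hsc.smul_const z'
    have := (h1.const_add y).fun_add h2
    simpa using this
  -- s ∘ γ vanishes near 0
  have hev : (fun t => s (γ t)) =ᶠ[nhds (0:ℝ)] fun _ => 0 := by
    have hc : ContinuousAt γ 0 := hγd.continuousAt
    have ev1 : ∀ᶠ t in nhds (0:ℝ), γ t ∈ U' := by
      have := hc.preimage_mem_nhds (hU'.mem_nhds (by rw [hγ0]; exact hy))
      filter_upwards [this] with t ht using ht
    have ev2 : ∀ᶠ t in nhds (0:ℝ), 1 + t * bv ≠ 0 := by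
      have hcont : ContinuousAt (fun t : ℝ => 1 + t * bv) 0 :=
        (continuous_const.add (continuous_id.mul continuous_const)).continuousAt
      have : (1 : ℝ) + 0 * bv ≠ 0 := by norm_num
      exact hcont.eventually_ne (by simpa using this)
    filter_upwards [ev1, ev2] with t ht1 ht2
    exact hvan (γ t) ht1 (hQγ t ht2)
  -- conclude
  have hsf : HasFDerivAt s (fderiv ℝ s y) (γ 0) := by rw [hγ0]; exact hs.hasFDerivAt
  have hcomp : HasDerivAt (fun t => s (γ t)) (fderiv ℝ s y v) 0 :=
    hsf.comp_hasDerivAt 0 hγd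
  have h0 : deriv (fun t => s (γ t)) 0 = 0 := by
    rw [Filter.EventuallyEq.deriv_eq hev]
    simp
  rw [← hcomp.deriv, h0]

/-- iterated Euler identity -/
lemma euler_itD {ft : (Idx p q → ℝ) → ℝ} {w : ℝ} (hU : IsOpen U)
    (hft : ContDiffOn ℝ (⊤ : ℕ∞) ft U)
    (hhom : ∀ x ∈ U, fderiv ℝ ft x x = w * ft x) (L : List (Idx p q → ℝ)) :
    ∀ x ∈ U, fderiv ℝ (itD p q L ft) x x = (w - L.length) * itD p q L ft x := by
  induction L with
  | nil => intro x hx; simpa [itD] using hhom x hx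
  | cons v L ih =>
    intro x hx
    set h := itD p q L ft with hh
    have hsmh : ContDiffOn ℝ (⊤ : ℕ∞) h U := sm_itD hU hft L
    have hsmF : ContDiffOn ℝ (⊤ : ℕ∞) (fderiv ℝ h) U := hsmh.fderiv_of_isOpen hU (by simp)
    have hdF : DifferentiableAt ℝ (fderiv ℝ h) x := diffAt_of_sm hU hsmF hx
    have hsym := ((hsmh x hx).contDiffAt (hU.mem_nhds hx)).isSymmSndFDerivAt (by rw [minSmoothness_of_isRCLikeNormedField]; exact WithTop.coe_le_coe.2 le_top)
    -- the function φ z = fderiv h z z - (w - |L|) * h z vanishes on U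
    have hφ : ∀ z ∈ U, (fderiv ℝ h z) z - (w - L.length) * h z = 0 := by
      intro z hz; rw [ih z hz]; ring
    have hφd : fderiv ℝ (fun z => (fderiv ℝ h z) z - (w - L.length) * h z) x = 0 := by
      have : (fun z => (fderiv ℝ h z) z - (w - L.length) * h z) =ᶠ[nhds x] fun _ => 0 := by
        filter_upwards [hU.mem_nhds hx] with z hz using hφ z hz
      rw [Filter.EventuallyEq.fderiv_eq this, fderiv_fun_const]
      rfl
    have hd1 : DifferentiableAt ℝ (fun z => (fderiv ℝ h z) z) x :=
      hdF.clm_apply differentiableAt_fun_id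
    have hd2 : DifferentiableAt ℝ (fun z => (w - (L.length : ℝ)) * h z) x :=
      (diffAt_of_sm hU hsmh hx).const_mul _
    have hsplit : fderiv ℝ (fun z => (fderiv ℝ h z) z) x v
        - fderiv ℝ (fun z => (w - L.length) * h z) x v = 0 := by
      have := fderiv_fun_sub hd1 hd2
      have h2 : fderiv ℝ (fun z => (fderiv ℝ h z) z - (w - L.length) * h z) x v = 0 := by
        rw [hφd]; rfl
      rw [this] at h2
      simpa using h2
    have hA : fderiv ℝ (fun z => (fderiv ℝ h z) z) x v
        = (fderiv ℝ h x) v + (fderiv ℝ (fderiv ℝ h) x v) x := by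
      rw [fderiv_clm_apply hdF differentiableAt_fun_id]
      simp
    have hBv : fderiv ℝ (fun z => (w - (L.length : ℝ)) * h z) x v
        = (w - L.length) * fderiv ℝ h x v := by
      rw [fderiv_const_mul (diffAt_of_sm hU hsmh hx)]
      rfl
    -- identify fderiv (itD (v::L) ft) x x with second derivative
    have hC : fderiv ℝ (itD p q (v :: L) ft) x x = (fderiv ℝ (fderiv ℝ h) x x) v := by
      show fderiv ℝ (fun z => (fderiv ℝ h z) v) x x = _
      rw [fderiv_clm_apply hdF (differentiableAt_const v)]
      simp
    have hswap : (fderiv ℝ (fderiv ℝ h) x x) v = (fderiv ℝ (fderiv ℝ h) x v) x :=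
      hsym.eq x v
    have : itD p q (v :: L) ft x = fderiv ℝ h x v := rfl
    rw [hC, hswap, this]
    have := hsplit
    rw [hA, hBv] at this
    simp only [List.length_cons]
    push_cast
    linarith

lemma sum_ht_right (y : Idx p q → ℝ) (f : Idx p q → ℝ) :
    ∑ I, ∑ J, htMat p q I J * (f I * bform p q y (eV p q J)) = ∑ I, f I * y I := by
  apply Finset.sum_congr rfl; intro I _
  calc ∑ J, htMat p q I J * (f I * bform p q y (eV p q J))
      = f I * ∑ J, htMat p q I J * bform p q y (eV p q J) := by
        rw [Finset.mul_sum]; apply Finset.sum_congr rfl; intros; ring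
    _ = f I * y I := by rw [ht_lam]

lemma sum_ht_left (y : Idx p q → ℝ) (f : Idx p q → ℝ) :
    ∑ I, ∑ J, htMat p q I J * (bform p q y (eV p q I) * f J) = ∑ J, f J * y J := by
  rw [Finset.sum_comm]
  calc ∑ J, ∑ I, htMat p q I J * (bform p q y (eV p q I) * f J)
      = ∑ J, ∑ I, htMat p q J I * (f J * bform p q y (eV p q I)) := by
        apply Finset.sum_congr rfl; intro J _
        apply Finset.sum_congr rfl; intro I _
        rw [ht_symm]; ring
    _ = ∑ J, f J * y J := by
        apply Finset.sum_congr rfl; intro J _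
        calc ∑ I, htMat p q J I * (f J * bform p q y (eV p q I))
            = f J * ∑ I, htMat p q J I * bform p q y (eV p q I) := by
              rw [Finset.mul_sum]; apply Finset.sum_congr rfl; intros; ring
          _ = f J * y J := by rw [ht_lam]

/-- continuous linear map `x ↦ bform x u` -/
def bclm (p q : ℕ) (u : Idx p q → ℝ) : (Idx p q → ℝ) →L[ℝ] ℝ :=
  ∑ I, bform p q (eV p q I) u • ContinuousLinearMap.proj I

lemma bclm_apply (u x : Idx p q → ℝ) : bclm p q u x = bform p q x u := by
  rw [bform_basis_expand_left, bclm]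
  simp only [ContinuousLinearMap.coe_sum', Finset.sum_apply, ContinuousLinearMap.coe_smul',
    Pi.smul_apply, ContinuousLinearMap.proj_apply, smul_eq_mul]
  apply Finset.sum_congr rfl; intros; ring

lemma bform_fn_eq (u : Idx p q → ℝ) : (fun x => bform p q x u) = ⇑(bclm p q u) := by
  funext x; rw [bclm_apply]

lemma fderiv_bform_left (u x : Idx p q → ℝ) :
    fderiv ℝ (fun x => bform p q x u) x = bclm p q u := by
  rw [bform_fn_eq]; exact (bclm p q u).fderiv

lemma diff_bform_left (u x : Idx p q → ℝ) :
    DifferentiableAt ℝ (fun x => bform p q x u) x := by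
  rw [bform_fn_eq]; exact (bclm p q u).differentiableAt

lemma cont_bform_left (u : Idx p q → ℝ) : Continuous (fun x => bform p q x u) := by
  rw [bform_fn_eq]; exact (bclm p q u).continuous

lemma bform_sub_right (x a b : Idx p q → ℝ) :
    bform p q x (a - b) = bform p q x a - bform p q x b := by
  rw [bform_symm, bform_sub_left, bform_symm a, bform_symm b]

lemma laplt_eq (f : (Idx p q → ℝ) → ℝ) :
    laplt p q f = fun x => ∑ I, ∑ J, htMat p q I J *
      itD p q [eV p q I, eV p q J] f x := by
  funext x
  rw [laplt, ht_inv]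
  rfl

lemma euler_eq (f : (Idx p q → ℝ) → ℝ) (x : Idx p q → ℝ) :
    euler p q f x = fderiv ℝ f x x := by
  rw [euler]
  have h2 : (fderiv ℝ f x) (∑ I, x I • eV p q I) = ∑ I, x I * fderiv ℝ f x (eV p q I) := by
    rw [map_sum]
    apply Finset.sum_congr rfl; intro I _
    rw [ContinuousLinearMap.map_smul, smul_eq_mul]
  rw [← vec_eq_sum x] at h2
  rw [h2]
  apply Finset.sum_congr rfl; intro I _
  rfl


end Helpers

set_option maxHeartbeats 1000000 in
/-- Uniqueness, to infinite order along the null cone, of the homogeneous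
harmonic extension of a density of weight `w` in the unobstructed case
`w + n/2 ∉ ℕ₊`. -/
theorem statement9 (p q : ℕ) (hn : 3 ≤ p + q)
    (w : ℝ) (hw : ∀ k : ℕ, 0 < k → w + (p + q : ℝ) / 2 ≠ (k : ℝ))
    (U : Set (Idx p q → ℝ)) (hU : IsOpenCone p q U)
    (ft : (Idx p q → ℝ) → ℝ) (hft : ContDiffOn ℝ (⊤ : ℕ∞) ft U)
    (hhom : ∀ x ∈ U, euler p q ft x = w * ft x)
    (hzero : ∀ y ∈ nullCone p q ∩ U, ft y = 0)
    (hharm : ∀ y ∈ nullCone p q ∩ U, VanishesToInfOrderAt p q (laplt p q ft) y) :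
    ∀ y ∈ nullCone p q ∩ U, VanishesToInfOrderAt p q ft y := by
  obtain ⟨hUo, hUne, _⟩ := hU
  have hhom' : ∀ x ∈ U, fderiv ℝ ft x x = w * ft x := by
    intro x hx; rw [← euler_eq]; exact hhom x hx
  -- main induction on derivative order
  have main : ∀ m : ℕ, ∀ y ∈ nullCone p q ∩ U, ∀ L : List (Idx p q → ℝ),
      L.length = m → itD p q L ft y = 0 := by
    intro m
    induction m with
    | zero =>
      intro y hy L hL
      rw [List.length_eq_zero_iff] at hL
      subst hL
      exact hzero y hy
    | succ k ih =>
      rintro y ⟨⟨hy0, hyQ⟩, hyU⟩ L hL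
      -- tangential vanishing of order-(k+1) derivatives with a tangential slot
      have tang : ∀ x ∈ U, QForm p q x = 0 → ∀ v : Idx p q → ℝ, bform p q x v = 0 →
          ∀ M : List (Idx p q → ℝ), M.length = k → itD p q (v :: M) ft x = 0 := by
        intro x hxU hxQ v hv M hM
        have hdiff : DifferentiableAt ℝ (itD p q M ft) x :=
          diffAt_of_sm hUo (sm_itD hUo hft M) hxU
        exact tangential_vanish hUo hUne hxU hxQ hdiff
          (fun x' hx' hq' => ih x' ⟨⟨hUne x' hx', hq'⟩, hx'⟩ M hM) hv
      -- a null direction transversal at y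
      obtain ⟨z, hz0, hyz⟩ := exists_null_partner y hy0
      have hZQ : QForm p q ((bform p q y z)⁻¹ • z) = 0 := by
        rw [QForm_smul, hz0]; ring
      have hyZ : bform p q y ((bform p q y z)⁻¹ • z) = 1 := by
        rw [bform_smul_right, inv_mul_cancel₀ hyz]
      set Z : Idx p q → ℝ := (bform p q y z)⁻¹ • z with hZdef
      clear_value Z
      clear hZdef hz0 hyz z
      have hyZne : bform p q y Z ≠ 0 := by rw [hyZ]; norm_num
      have hZZ : bform p q Z Z = 0 := hZQ
      -- decomposition of the outermost slot at y
      have hdecy : ∀ (u : Idx p q → ℝ) (M : List (Idx p q → ℝ)),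
          itD p q (u :: M) ft y
            = itD p q ((u - bform p q y u • Z) :: M) ft y
              + bform p q y u * itD p q (Z :: M) ft y := by
        intro u M
        have h1 := itD_outer_add (g := ft) (u - bform p q y u • Z) (bform p q y u • Z) M y
        rw [sub_add_cancel] at h1
        rw [h1, itD_outer_smul]
      have htany : ∀ u : Idx p q → ℝ, bform p q y (u - bform p q y u • Z) = 0 := by
        intro u
        rw [bform_sub_right, bform_smul_right, hyZ]; ring
      -- the structure identity on the null cone
      have hstruct : ∀ u : Idx p q → ℝ, ∀ x ∈ U, QForm p q x = 0 → bform p q x Z ≠ 0 →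
          itD p q (u :: List.replicate k Z) ft x * bform p q x Z
            = itD p q (List.replicate (k+1) Z) ft x * bform p q x u := by
        intro u x hxU hxQ hbz
        set μ : ℝ := bform p q x u / bform p q x Z with hμ
        have h1 := itD_outer_add (g := ft) (u - μ • Z) (μ • Z) (List.replicate k Z) x
        rw [sub_add_cancel] at h1
        rw [h1, itD_outer_smul]
        have htan : bform p q x (u - μ • Z) = 0 := by
          rw [bform_sub_right, bform_smul_right, hμ]
          field_simp
          ring
        rw [tang x hxU hxQ _ htan (List.replicate k Z) List.length_replicate]
        have h2 : (Z :: List.replicate k Z) = List.replicate (k+1) Z :=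
          (List.replicate_succ (a := Z) (n := k)).symm
        rw [h2, hμ]
        field_simp
        ring
      set c : ℝ := itD p q (List.replicate (k+1) Z) ft y with hc
      have hval : ∀ u : Idx p q → ℝ,
          itD p q (u :: List.replicate k Z) ft y = c * bform p q y u := by
        intro u
        have := hstruct u y hyU hyQ hyZne
        rw [hyZ, mul_one] at this
        rw [this]
      -- differentiated structure identity
      have hK1 : ∀ u v : Idx p q → ℝ, bform p q y v = 0 →
          itD p q (v :: u :: List.replicate k Z) ft y
            = itD p q (v :: List.replicate (k+1) Z) ft y * bform p q y u
              + c * bform p q v u - c * bform p q v Z * bform p q y u := by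
        intro u v hv
        have hU'o : IsOpen (U ∩ {x | bform p q x Z ≠ 0}) :=
          hUo.inter (isOpen_compl_singleton.preimage (cont_bform_left Z))
        have hyU' : y ∈ U ∩ {x | bform p q x Z ≠ 0} := ⟨hyU, hyZne⟩
        have hF1 : ContDiffOn ℝ (⊤ : ℕ∞) (itD p q (u :: List.replicate k Z) ft) U :=
          sm_itD hUo hft _
        have hF2 : ContDiffOn ℝ (⊤ : ℕ∞) (itD p q (List.replicate (k+1) Z) ft) U :=
          sm_itD hUo hft _
        have hF1d : DifferentiableAt ℝ (itD p q (u :: List.replicate k Z) ft) y :=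
          diffAt_of_sm hUo hF1 hyU
        have hF2d : DifferentiableAt ℝ (itD p q (List.replicate (k+1) Z) ft) y :=
          diffAt_of_sm hUo hF2 hyU
        have hvan : ∀ x ∈ U ∩ {x | bform p q x Z ≠ 0}, QForm p q x = 0 →
            (fun x => itD p q (u :: List.replicate k Z) ft x * bform p q x Z
              - itD p q (List.replicate (k+1) Z) ft x * bform p q x u) x = 0 := by
          rintro x ⟨hxU, hxz⟩ hxQ
          simp only
          rw [hstruct u x hxU hxQ hxz]; ring
        have hdiff : DifferentiableAt ℝ (fun x => itD p q (u :: List.replicate k Z) ft x * bform p q x Z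
              - itD p q (List.replicate (k+1) Z) ft x * bform p q x u) y :=
          ((hF1d.mul (diff_bform_left Z y)).sub (hF2d.mul (diff_bform_left u y)))
        have h0 := tangential_vanish hU'o (fun x hx => hUne x hx.1) hyU' hyQ hdiff hvan hv
        -- compute the derivative
        have hd1 : fderiv ℝ (fun x => itD p q (u :: List.replicate k Z) ft x * bform p q x Z) y
            = itD p q (u :: List.replicate k Z) ft y • bclm p q Z
              + bform p q y Z • fderiv ℝ (itD p q (u :: List.replicate k Z) ft) y := by
          rw [fderiv_fun_mul hF1d (diff_bform_left Z y), fderiv_bform_left]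
        have hd2 : fderiv ℝ (fun x => itD p q (List.replicate (k+1) Z) ft x * bform p q x u) y
            = itD p q (List.replicate (k+1) Z) ft y • bclm p q u
              + bform p q y u • fderiv ℝ (itD p q (List.replicate (k+1) Z) ft) y := by
          rw [fderiv_fun_mul hF2d (diff_bform_left u y), fderiv_bform_left]
        rw [fderiv_fun_sub (hF1d.fun_mul (diff_bform_left Z y)) (hF2d.fun_mul (diff_bform_left u y))] at h0
        have h0v : (0:ℝ) = itD p q (u :: List.replicate k Z) ft y * bform p q v Z
            + bform p q y Z * itD p q (v :: u :: List.replicate k Z) ft y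
            - (itD p q (List.replicate (k+1) Z) ft y * bform p q v u
              + bform p q y u * itD p q (v :: List.replicate (k+1) Z) ft y) := by
          rw [← h0]
          rw [ContinuousLinearMap.sub_apply, hd1, hd2]
          simp only [ContinuousLinearMap.add_apply, ContinuousLinearMap.coe_smul',
            Pi.smul_apply, smul_eq_mul, bclm_apply]
          rfl
        rw [hval u, hyZ, ← hc] at h0v
        linarith
      -- the Laplacian bridge
      have hlapSm : ContDiffOn ℝ (⊤ : ℕ∞) (laplt p q ft) U := by
        rw [laplt_eq]
        apply ContDiffOn.sum; intro I _
        apply ContDiffOn.sum; intro J _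
        exact contDiffOn_const.mul (sm_itD hUo hft _)
      have hlap0 : itD p q (List.replicate k Z) (laplt p q ft) y = 0 := by
        have hb := iteratedFDeriv_eq_itD hUo hlapSm k (fun _ : Fin k => Z) y hyU
        rw [List.ofFn_const] at hb
        rw [← hb, hharm y ⟨⟨hy0, hyQ⟩, hyU⟩ k]
        rfl
      have hS : (∑ I, ∑ J, htMat p q I J
          * itD p q (eV p q I :: eV p q J :: List.replicate k Z) ft y) = 0 := by
        rw [← hlap0]
        rw [laplt_eq]
        rw [itD_sum hUo Finset.univ
          (fun I => fun x => ∑ J, htMat p q I J * itD p q [eV p q I, eV p q J] ft x)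
          (fun I _ => by
            apply ContDiffOn.sum; intro J _
            exact contDiffOn_const.mul (sm_itD hUo hft _)) (List.replicate k Z) y hyU]
        apply Finset.sum_congr rfl; intro I _
        rw [itD_sum hUo Finset.univ
          (fun J => fun x => htMat p q I J * itD p q [eV p q I, eV p q J] ft x)
          (fun J _ => contDiffOn_const.mul (sm_itD hUo hft _)) (List.replicate k Z) y hyU]
        apply Finset.sum_congr rfl; intro J _
        rw [itD_const_mul hUo _ _ (sm_itD hUo hft _) (List.replicate k Z) y hyU]
        congr 1
        rw [← itD_append]
        exact (itD_perm hUo hft (List.perm_append_comm (l₁ := [eV p q I, eV p q J])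
          (l₂ := List.replicate k Z)) y hyU)
      -- evaluate the trace using the structure identity
      have hTIJ : ∀ I J : Idx p q,
          itD p q (eV p q I :: eV p q J :: List.replicate k Z) ft y
            = itD p q (eV p q I :: List.replicate (k+1) Z) ft y * bform p q y (eV p q J)
              + bform p q y (eV p q I) * itD p q (eV p q J :: List.replicate (k+1) Z) ft y
              + c * htMat p q I J
              - c * bform p q y (eV p q I) * bform p q (eV p q J) Z
              - c * bform p q (eV p q I) Z * bform p q y (eV p q J)
              - bform p q y (eV p q I) * bform p q y (eV p q J)
                  * itD p q (List.replicate (k+2) Z) ft y := by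
        intro I J
        rw [hdecy (eV p q I) (eV p q J :: List.replicate k Z)]
        -- second piece: swap and merge
        have hsw : itD p q (Z :: eV p q J :: List.replicate k Z) ft y
            = itD p q (eV p q J :: List.replicate (k+1) Z) ft y := by
          rw [itD_swap hUo hft hyU, List.replicate_succ]
        -- first piece via hK1
        rw [hK1 (eV p q J) _ (htany (eV p q I)), hsw]
        -- expand itD ((eV I - lam I Z) :: rep (k+1)) and bform terms
        have he1 := hdecy (eV p q I) (List.replicate (k+1) Z)
        rw [show (Z :: List.replicate (k+1) Z) = List.replicate (k+2) Z from
          (List.replicate_succ (a := Z) (n := k+1)).symm] at he1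
        have he1' : itD p q ((eV p q I - bform p q y (eV p q I) • Z)
              :: List.replicate (k+1) Z) ft y
            = itD p q (eV p q I :: List.replicate (k+1) Z) ft y
              - bform p q y (eV p q I) * itD p q (List.replicate (k+2) Z) ft y := by
          linarith [he1]
        have he2 : bform p q (eV p q I - bform p q y (eV p q I) • Z) (eV p q J)
            = htMat p q I J - bform p q y (eV p q I) * bform p q (eV p q J) Z := by
          rw [bform_sub_left, bform_smul_left, bform_basis, bform_symm Z]
        have he3 : bform p q (eV p q I - bform p q y (eV p q I) • Z) Z
            = bform p q (eV p q I) Z := by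
          rw [bform_sub_left, bform_smul_left, hZZ]; ring
        rw [he1', he2, he3]
        ring
      -- Euler identity
      have hD1y : itD p q (y :: List.replicate (k+1) Z) ft y = (w - (k+1)) * c := by
        have he := euler_itD hUo hft hhom' (List.replicate (k+1) Z) y hyU
        rw [List.length_replicate] at he
        calc itD p q (y :: List.replicate (k+1) Z) ft y
            = fderiv ℝ (itD p q (List.replicate (k+1) Z) ft) y y := rfl
          _ = (w - (k+1)) * c := by rw [he, hc]; push_cast; ring
      -- summing the trace
      have hSval : ∑ I, ∑ J, htMat p q I J
          * itD p q (eV p q I :: eV p q J :: List.replicate k Z) ft y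
          = 2 * ((w - (k+1)) * c) + c * (p + q : ℝ) := by
        have hterm : ∀ I J : Idx p q, htMat p q I J
            * itD p q (eV p q I :: eV p q J :: List.replicate k Z) ft y
            = htMat p q I J * (itD p q (eV p q I :: List.replicate (k+1) Z) ft y
                * bform p q y (eV p q J))
              + htMat p q I J * (bform p q y (eV p q I)
                * itD p q (eV p q J :: List.replicate (k+1) Z) ft y)
              + c * (htMat p q I J * htMat p q I J)
              - c * (htMat p q I J * (bform p q y (eV p q I) * bform p q (eV p q J) Z))
              - c * (htMat p q I J * (bform p q (eV p q I) Z * bform p q y (eV p q J)))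
              - itD p q (List.replicate (k+2) Z) ft y
                  * (htMat p q I J * (bform p q y (eV p q I) * bform p q y (eV p q J))) := by
          intro I J
          rw [hTIJ I J]; ring
        have hsum1 : ∑ I, ∑ J, htMat p q I J
            * itD p q (eV p q I :: eV p q J :: List.replicate k Z) ft y
            = (∑ I, ∑ J, htMat p q I J * (itD p q (eV p q I :: List.replicate (k+1) Z) ft y
                * bform p q y (eV p q J)))
              + (∑ I, ∑ J, htMat p q I J * (bform p q y (eV p q I)
                * itD p q (eV p q J :: List.replicate (k+1) Z) ft y))
              + c * (∑ I, ∑ J, htMat p q I J * htMat p q I J)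
              - c * (∑ I, ∑ J, htMat p q I J
                  * (bform p q y (eV p q I) * bform p q (eV p q J) Z))
              - c * (∑ I, ∑ J, htMat p q I J
                  * (bform p q (eV p q I) Z * bform p q y (eV p q J)))
              - itD p q (List.replicate (k+2) Z) ft y
                  * (∑ I, ∑ J, htMat p q I J
                    * (bform p q y (eV p q I) * bform p q y (eV p q J))) := by
          rw [Finset.sum_congr rfl fun I _ => Finset.sum_congr rfl fun J _ => hterm I J]
          simp only [Finset.sum_add_distrib, Finset.sum_sub_distrib, ← Finset.mul_sum]
        rw [hsum1]
        -- the six sums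
        have hP1 : ∑ I, ∑ J, htMat p q I J
            * (itD p q (eV p q I :: List.replicate (k+1) Z) ft y * bform p q y (eV p q J))
            = (w - (k+1)) * c := by
          rw [sum_ht_right y (fun I => itD p q (eV p q I :: List.replicate (k+1) Z) ft y)]
          rw [← hD1y, itD_outer_basis y (List.replicate (k+1) Z) y]
          apply Finset.sum_congr rfl; intros; ring
        have hP2 : ∑ I, ∑ J, htMat p q I J
            * (bform p q y (eV p q I) * itD p q (eV p q J :: List.replicate (k+1) Z) ft y)
            = (w - (k+1)) * c := by
          rw [sum_ht_left y (fun J => itD p q (eV p q J :: List.replicate (k+1) Z) ft y)]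
          rw [← hD1y, itD_outer_basis y (List.replicate (k+1) Z) y]
          apply Finset.sum_congr rfl; intros; ring
        have hbez : ∀ K : Idx p q, bform p q (eV p q K) Z * y K = y K * bform p q (eV p q K) Z :=
          fun K => mul_comm _ _
        have hbZy : ∑ K, bform p q (eV p q K) Z * y K = 1 := by
          rw [Finset.sum_congr rfl fun K _ => hbez K, ← bform_basis_expand_left, hyZ]
        have hP4 : ∑ I, ∑ J, htMat p q I J
            * (bform p q y (eV p q I) * bform p q (eV p q J) Z) = 1 := by
          rw [sum_ht_left y (fun J => bform p q (eV p q J) Z), hbZy]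
        have hP5 : ∑ I, ∑ J, htMat p q I J
            * (bform p q (eV p q I) Z * bform p q y (eV p q J)) = 1 := by
          rw [sum_ht_right y (fun I => bform p q (eV p q I) Z), hbZy]
        have hP6 : ∑ I, ∑ J, htMat p q I J
            * (bform p q y (eV p q I) * bform p q y (eV p q J)) = 0 := by
          rw [sum_ht_left y (fun J => bform p q y (eV p q J))]
          have hthis : ∑ K, bform p q y (eV p q K) * y K = bform p q y y := by
            rw [bform_basis_expand_left y y]
            apply Finset.sum_congr rfl
            intro K _
            rw [bform_symm y (eV p q K)]
            ring
          rw [hthis, ← QForm_eq_bform, hyQ]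
        rw [hP1, hP2, ht_trace, hP4, hP5, hP6]
        ring
      -- conclude c = 0
      have hfac : (2 * w + ((p : ℝ) + q) - 2 * (k+1)) ≠ 0 := by
        intro hzero'
        apply hw (k+1) (Nat.succ_pos k)
        push_cast
        linarith
      have hc0 : c = 0 := by
        have h1 : c * (2 * w + ((p : ℝ) + q) - 2 * (k+1)) = 0 := by
          rw [hSval] at hS
          linarith
        rcases mul_eq_zero.1 h1 with h | h
        · exact h
        · exact absurd h hfac
      -- all order-(k+1) derivatives vanish at y
      have hfin : ∀ M : List (Idx p q → ℝ), ∀ r : ℕ, M.length + r = k + 1 →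
          itD p q (M ++ List.replicate r Z) ft y = 0 := by
        intro M
        induction M with
        | nil =>
          intro r hr
          simp only [List.length_nil, Nat.zero_add] at hr
          subst hr
          rw [List.nil_append]
          exact hc0
        | cons u M' ihM =>
          intro r hr
          simp only [List.length_cons] at hr
          rw [List.cons_append, hdecy u (M' ++ List.replicate r Z)]
          have hlen : (M' ++ List.replicate r Z).length = k := by
            simp only [List.length_append, List.length_replicate]
            omega
          rw [tang y hyU hyQ _ (htany u) _ hlen]
          have hperm : (Z :: (M' ++ List.replicate r Z)).Perm
              (M' ++ List.replicate (r+1) Z) := by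
            rw [List.replicate_succ]
            exact List.perm_middle.symm
          rw [itD_perm hUo hft hperm y hyU, ihM (r+1) (by omega)]
          ring
      have := hfin L 0 (by simpa using hL)
      simpa using this


  intro y hy k
  have hyU : y ∈ U := hy.2
  refine ContinuousMultilinearMap.ext fun v => ?_
  rw [iteratedFDeriv_eq_itD hUo hft k v y hyU]
  rw [main k y hy (List.ofFn v) (by simp)]
  rfl
end
end
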